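/- arXiv:0902.1824 — 8 statements merged into one kernel-verified Lean document; each statement's English description precedes it below -/
import Mathlib

section
/- Let 𝕂 be a field and let A be a Weil algebra over 𝕂. Then there exist n, k ∈ ℕ and an ideal I of the polynomial algebra 𝕂[X_1,…,X_n] (= MvPolynomial (Fin n) 𝕂) such that I contains the k-th power of the ideal 𝔪 generated by the variables X_1,…,X_n, and A is isomorphic as a 𝕂-algebra to the quotient 𝕂[X_1,…,X_n]/I. -/
/-!
Shift a basis `b` of `A` to the nilpotent elements `b i - c i`. They still generate `A` as a
`𝕂`-algebra, so evaluation at them presents `A` as `𝕂[X]/I`; since `A` is Artinian its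
nilradical is nilpotent, say of index `k`, and every monomial of degree `k` in the `X i` lands
in it, hence `𝔪^k ≤ I`.
-/

namespace MvPolynomial

variable {σ R A : Type*}

theorem aeval_sub_algebraMap_surjective [CommRing R] [CommRing A] [Algebra R A]
    (v : σ → A) (c : σ → R) (hv : Algebra.adjoin R (Set.range v) = ⊤) :
    Function.Surjective (aeval (R := R) fun i => v i - algebraMap R A (c i)) := by
  rw [← AlgHom.range_eq_top, ← Algebra.adjoin_range_eq_range_aeval, eq_top_iff, ← hv,
    Algebra.adjoin_le_iff]
  rintro _ ⟨i, rfl⟩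
  set S := Algebra.adjoin R (Set.range fun i => v i - algebraMap R A (c i))
  simpa using S.add_mem (Algebra.subset_adjoin (Set.mem_range_self i)) (S.algebraMap_mem (c i))

theorem span_range_X_pow_le_ker_aeval [CommSemiring R] [CommSemiring A] [Algebra R A]
    {J : Ideal A} {k : ℕ} (hJ : J ^ k = ⊥) {a : σ → A} (ha : ∀ i, a i ∈ J) :
    Ideal.span (Set.range (X : σ → MvPolynomial σ R)) ^ k ≤ RingHom.ker (aeval a) :=
  calc Ideal.span (Set.range X) ^ k ≤ (J.comap (aeval a)) ^ k :=
        Ideal.pow_right_mono (Ideal.span_le.2 <| by rintro _ ⟨i, rfl⟩; simpa using ha i) k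
    _ ≤ (J ^ k).comap (aeval a) := Ideal.le_comap_pow _ k
    _ = RingHom.ker (aeval a) := by rw [hJ]; rfl

end MvPolynomial

theorem weil_algebra_iso_polynomial_quotient_general {𝕂 : Type*} [Field 𝕂]
    (A : Type*) [CommRing A] [Algebra 𝕂 A] [FiniteDimensional 𝕂 A]
    (hA : ∀ a : A, ∃ c : 𝕂, IsNilpotent (a - algebraMap 𝕂 A c)) :
    ∃ (n k : ℕ) (I : Ideal (MvPolynomial (Fin n) 𝕂)),
      (Ideal.span (Set.range (MvPolynomial.X : Fin n → MvPolynomial (Fin n) 𝕂))) ^ k ≤ I ∧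
      Nonempty ((MvPolynomial (Fin n) 𝕂 ⧸ I) ≃ₐ[𝕂] A) := by
  let b := Module.finBasis 𝕂 A
  choose c hc using fun i => hA (b i)
  have hb : Algebra.adjoin 𝕂 (Set.range b) = ⊤ :=
    eq_top_iff.2 <| b.span_eq.symm.le.trans (Algebra.span_le_adjoin 𝕂 _)
  have hsurj := MvPolynomial.aeval_sub_algebraMap_surjective b c hb
  have : IsArtinianRing A := .of_finite 𝕂 A
  obtain ⟨k, hk⟩ := IsArtinianRing.isNilpotent_nilradical (R := A)
  exact ⟨_, k, _, MvPolynomial.span_range_X_pow_le_ker_aeval hk fun i => mem_nilradical.2 (hc i),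
    ⟨Ideal.quotientKerAlgEquivOfSurjective hsurj⟩⟩

/-- Every Weil algebra `A` over a field `𝕂` (a nontrivial finite-dimensional commutative
unital `𝕂`-algebra in which every element differs from a scalar by a nilpotent) is
isomorphic to a quotient `𝕂[X_1,…,X_n]/I` of a polynomial algebra by an ideal `I`
containing a power `𝔪^k` of the ideal `𝔪` generated by the variables. -/
theorem weil_algebra_iso_polynomial_quotient {𝕂 : Type*} [Field 𝕂]
    (A : Type*) [CommRing A] [Algebra 𝕂 A] [Nontrivial A] [FiniteDimensional 𝕂 A]
    (hA : ∀ a : A, ∃ c : 𝕂, IsNilpotent (a - algebraMap 𝕂 A c)) :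
    ∃ (n k : ℕ) (I : Ideal (MvPolynomial (Fin n) 𝕂)),
      (Ideal.span (Set.range (MvPolynomial.X : Fin n → MvPolynomial (Fin n) 𝕂))) ^ k ≤ I ∧
      Nonempty ((MvPolynomial (Fin n) 𝕂 ⧸ I) ≃ₐ[𝕂] A) :=
  weil_algebra_iso_polynomial_quotient_general A hA
end

section
/- Let 𝕂 be a field, n, k ∈ ℕ, and let I be a proper ideal of the polynomial algebra 𝕂[X_1,…,X_n] (= MvPolynomial (Fin n) 𝕂) containing the k-th power of the ideal 𝔪 generated by the variables X_1,…,X_n. Then the quotient 𝕂-algebra 𝕂[X_1,…,X_n]/I is finite-dimensional over 𝕂, and every element of the quotient differs from a scalar multiple of the identity by a nilpotent element; in other words, 𝕂[X_1,…,X_n]/I is a Weil algebra over 𝕂. -/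
/-!
Every variable `Xᵢ` lies in `𝔪`, so its image in `A = 𝕂[X₁,…,Xₙ]/I` is nilpotent because
`𝔪ᵏ ⊆ I`. Thus `A` is generated as a `𝕂`-algebra by finitely many integral elements, hence is a
finite `𝕂`-module. Likewise `p - p(0) ∈ 𝔪` for every polynomial `p`, so the image of `p` differs
from the scalar `p(0)` by a nilpotent.
-/

open MvPolynomial

theorem IsNilpotent.isIntegral {R A : Type*} [CommRing R] [Ring A] [Algebra R A] {x : A}
    (hx : IsNilpotent x) : IsIntegral R x := by
  obtain ⟨m, hm⟩ := hx
  exact ⟨Polynomial.X ^ m, Polynomial.monic_X_pow m, by simp [hm]⟩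

theorem Algebra.finite_of_adjoin_eq_top {R A : Type*} [CommRing R] [CommRing A] [Algebra R A]
    {s : Set A} (hs : s.Finite) (hint : ∀ x ∈ s, IsIntegral R x) (htop : adjoin R s = ⊤) :
    Module.Finite R A :=
  Module.finite_def.mpr <| by
    rw [← Algebra.top_toSubmodule, ← htop]
    exact fg_adjoin_of_finite hs hint

theorem Ideal.Quotient.isNilpotent_mk_of_pow_le {R : Type*} [CommRing R] {I J : Ideal R}
    {k : ℕ} (h : J ^ k ≤ I) {x : R} (hx : x ∈ J) : IsNilpotent (Ideal.Quotient.mk I x) :=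
  ⟨k, by rw [← map_pow, Ideal.Quotient.eq_zero_iff_mem]; exact h (Ideal.pow_mem_pow hx k)⟩

namespace MvPolynomial

variable {σ R : Type*} [CommRing R]

theorem sub_C_coeff_zero_mem_idealOfVars (p : MvPolynomial σ R) :
    p - C (p.coeff 0) ∈ idealOfVars σ R := by
  rw [← pow_one (idealOfVars σ R), mem_pow_idealOfVars_iff']
  intro m hm
  obtain rfl : m = 0 := by simpa [Finsupp.degree_eq_zero_iff] using hm
  simp

theorem adjoin_range_mk_X (I : Ideal (MvPolynomial σ R)) :
    Algebra.adjoin R (Set.range fun i => Ideal.Quotient.mk I (X i)) = ⊤ := by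
  rw [Algebra.adjoin_range_eq_range_aeval, ← mkₐ_eq_aeval, AlgHom.range_eq_top]
  exact Ideal.Quotient.mkₐ_surjective R I

theorem finite_quotient_of_isNilpotent_mk_X [Finite σ] (I : Ideal (MvPolynomial σ R))
    (h : ∀ i, IsNilpotent (Ideal.Quotient.mk I (X i))) :
    Module.Finite R (MvPolynomial σ R ⧸ I) :=
  Algebra.finite_of_adjoin_eq_top (Set.finite_range _)
    (by rintro _ ⟨i, rfl⟩; exact (h i).isIntegral) (adjoin_range_mk_X I)

end MvPolynomial

/-- If `I` is a proper ideal of `𝕂[X_1,…,X_n]` containing a power `𝔪^k` of the ideal `𝔪`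
generated by the variables, then `𝕂[X_1,…,X_n]/I` is a Weil algebra over `𝕂`: it is
nontrivial, finite-dimensional, and every element differs from a scalar by a nilpotent. -/
theorem polynomial_quotient_is_weil_algebra {𝕂 : Type*} [Field 𝕂] {n k : ℕ}
    (I : Ideal (MvPolynomial (Fin n) 𝕂)) (hI : I ≠ ⊤)
    (hk : (Ideal.span (Set.range (MvPolynomial.X : Fin n → MvPolynomial (Fin n) 𝕂))) ^ k ≤ I) :
    Nontrivial (MvPolynomial (Fin n) 𝕂 ⧸ I) ∧
    FiniteDimensional 𝕂 (MvPolynomial (Fin n) 𝕂 ⧸ I) ∧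
    ∀ a : MvPolynomial (Fin n) 𝕂 ⧸ I, ∃ c : 𝕂,
      IsNilpotent (a - algebraMap 𝕂 (MvPolynomial (Fin n) 𝕂 ⧸ I) c) := by
  have hnil : ∀ p ∈ idealOfVars (Fin n) 𝕂, IsNilpotent (Ideal.Quotient.mk I p) :=
    fun _ hp => Ideal.Quotient.isNilpotent_mk_of_pow_le hk hp
  refine ⟨Ideal.Quotient.nontrivial_iff.mpr hI,
    finite_quotient_of_isNilpotent_mk_X I fun i => hnil _ (Ideal.subset_span ⟨i, rfl⟩), ?_⟩
  intro a
  obtain ⟨p, rfl⟩ := Ideal.Quotient.mk_surjective a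
  have := hnil _ (sub_C_coeff_zero_mem_idealOfVars p)
  rw [map_sub, ← MvPolynomial.algebraMap_eq, Ideal.Quotient.mk_algebraMap] at this
  exact ⟨p.coeff 0, this⟩
end

section
/- Milnor's exercise (even core of the paper's 'super Milnor's exercise'): let M be a smooth manifold without boundary modeled on ℝ^n (finite-dimensional), Hausdorff and second countable. Then for every unital ℝ-algebra homomorphism φ : C^∞(M) → ℝ there exists a unique point x ∈ M such that φ(f) = f(x) for every f ∈ C^∞(M). Thus the ℝ-algebra homomorphisms C^∞(M) → ℝ are exactly the evaluations at points of M. -/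
/-!
If `φ` were evaluation at no point, then for every `x` some `f` has `φ f ≠ f x`, and
`(f - φ f)²` is a nonnegative element of `ker φ` that is positive at `x`. A smooth exhaustion
function `h` has a compact level set `{h = φ h}`, so finitely many of these functions together with
`(h - φ h)²` add up to an everywhere positive, hence invertible, element of `ker φ`, which is
absurd. Uniqueness holds because smooth functions separate points.
-/

open scoped Manifold ContDiff
open Set

theorem IsCompact.exists_finset_sum_pos {X : Type*} [TopologicalSpace X] {K : Set X}
    (hK : IsCompact K) (q : X → X → ℝ) (hq : ∀ i, Continuous (q i)) (hnn : ∀ i y, 0 ≤ q i y)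
    (hpos : ∀ x ∈ K, 0 < q x x) : ∃ s : Finset X, ∀ y ∈ K, 0 < ∑ i ∈ s, q i y := by
  obtain ⟨s, -, hs⟩ := hK.elim_nhds_subcover (fun i ↦ {y | 0 < q i y})
    fun x hx ↦ (isOpen_lt continuous_const (hq x)).mem_nhds (hpos x hx)
  refine ⟨s, fun y hy ↦ ?_⟩
  obtain ⟨i, hi, hiy⟩ := mem_iUnion₂.mp (hs hy)
  exact Finset.sum_pos' (fun j _ ↦ hnn j y) ⟨i, hi, hiy⟩

namespace ContMDiffMap

variable {E H M : Type*} [NormedAddCommGroup E] [NormedSpace ℝ E] [TopologicalSpace H]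
  {I : ModelWithCorners ℝ E H} [TopologicalSpace M] [ChartedSpace H M] {n : ℕ∞}

theorem isUnit_of_forall_ne_zero (g : C^n⟮I, M; ℝ⟯) (hg : ∀ x, g x ≠ 0) : IsUnit g :=
  isUnit_iff_exists_inv.mpr
    ⟨⟨fun x ↦ (g x)⁻¹, g.contMDiff.inv₀ hg⟩, ext fun x ↦ mul_inv_cancel₀ (hg x)⟩

variable [FiniteDimensional ℝ E] [IsManifold I ∞ M] [T2Space M] [SigmaCompactSpace M]

theorem exists_isCompact_sublevel :
    ∃ h : C^n⟮I, M; ℝ⟯, ∀ c : ℝ, IsCompact {x | h x ≤ c} := by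
  have := Manifold.locallyCompact_of_finiteDimensional (M := M) I
  let K := CompactExhaustion.choice M
  obtain ⟨h, hh⟩ : ∃ h : C^n⟮I, M; ℝ⟯, ∀ x, h x ∈ Ici (K.find x : ℝ) := by
    refine exists_contMDiffMap_forall_mem_convex_of_local_const I (fun x ↦ convex_Ici _)
      fun x ↦ ⟨K.find x + 1, ?_⟩
    filter_upwards [mem_interior_iff_mem_nhds.mp (K.subset_interior_succ _ (K.mem_find x))]
      with y hy
    exact mem_Ici.mpr (mod_cast K.mem_iff_find_le.mp hy)
  refine ⟨h, fun c ↦ (K.isCompact ⌈c⌉₊).of_isClosed_subset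
    (isClosed_le h.contMDiff.continuous continuous_const) fun x hx ↦ K.mem_iff_find_le.mpr ?_⟩
  exact_mod_cast (hh x).trans (hx.trans (Nat.le_ceil c))

theorem eq_of_forall_apply_eq {x y : M} (h : ∀ f : C^n⟮I, M; ℝ⟯, f x = f y) : x = y := by
  by_contra hne
  obtain ⟨f, hfx, hfy, -⟩ := exists_contMDiffMap_zero_one_of_isClosed I (n := n)
    isClosed_singleton isClosed_singleton (disjoint_singleton.mpr hne)
  simpa [hfx rfl, hfy rfl] using h f

theorem exists_forall_algHom_apply_eq_apply (φ : C^n⟮I, M; ℝ⟯ →ₐ[ℝ] ℝ) :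
    ∃ x : M, ∀ f : C^n⟮I, M; ℝ⟯, φ f = f x := by
  by_contra! hφ
  choose f hf using hφ
  let dev (g : C^n⟮I, M; ℝ⟯) : C^n⟮I, M; ℝ⟯ := (g - algebraMap ℝ _ (φ g)) ^ 2
  have dev_apply (g : C^n⟮I, M; ℝ⟯) (y : M) : dev g y = (g y - φ g) ^ 2 := rfl
  have dev_nonneg (g : C^n⟮I, M; ℝ⟯) (y : M) : 0 ≤ dev g y := by rw [dev_apply]; positivity
  have φ_dev (g : C^n⟮I, M; ℝ⟯) : φ (dev g) = 0 := by simp [dev]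
  obtain ⟨h, hh⟩ := exists_isCompact_sublevel (I := I) (M := M) (n := n)
  have hlevel : IsCompact {y | h y = φ h} :=
    (hh (φ h)).of_isClosed_subset (isClosed_eq h.contMDiff.continuous continuous_const)
      fun y hy ↦ hy.le
  obtain ⟨s, hs⟩ := hlevel.exists_finset_sum_pos (fun x ↦ dev (f x))
    (fun x ↦ (dev (f x)).contMDiff.continuous) (fun x ↦ dev_nonneg (f x))
    fun x _ ↦ by rw [dev_apply]; exact pow_two_pos_of_ne_zero (sub_ne_zero.mpr (hf x).symm)
  let g := dev h + ∑ i ∈ s, dev (f i)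
  have hg_pos (y : M) : 0 < g y := by
    have hsum : (∑ i ∈ s, dev (f i)) y = ∑ i ∈ s, dev (f i) y :=
      map_sum (evalRingHom y) _ s
    change 0 < dev h y + (∑ i ∈ s, dev (f i)) y
    rw [hsum]
    by_cases hy : h y = φ h
    · exact add_pos_of_nonneg_of_pos (dev_nonneg h y) (hs y hy)
    · refine add_pos_of_pos_of_nonneg ?_ (Finset.sum_nonneg fun i _ ↦ dev_nonneg (f i) y)
      exact (dev_apply h y).symm ▸ pow_two_pos_of_ne_zero (sub_ne_zero.mpr hy)
  have hφg : φ g = 0 := by simp [g, map_sum, φ_dev]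
  exact not_isUnit_zero (hφg ▸ (isUnit_of_forall_ne_zero g fun y ↦ (hg_pos y).ne').map φ)

end ContMDiffMap

/-- **Milnor's exercise**: every unital `ℝ`-algebra homomorphism from the algebra
`C^∞(M)` of smooth real-valued functions on a finite-dimensional, Hausdorff, second
countable smooth manifold `M` without boundary is evaluation at a unique point. -/
theorem milnor_exercise {n : ℕ} {M : Type*} [TopologicalSpace M]
    [ChartedSpace (EuclideanSpace ℝ (Fin n)) M]
    [IsManifold (𝓡 n) (⊤ : ℕ∞) M] [T2Space M] [SecondCountableTopology M]
    (φ : C^(⊤ : ℕ∞)⟮𝓡 n, M; ℝ⟯ →ₐ[ℝ] ℝ) :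
    ∃! x : M, ∀ f : C^(⊤ : ℕ∞)⟮𝓡 n, M; ℝ⟯, φ f = f x := by
  -- with second countability, this makes `M` σ-compact
  have := Manifold.locallyCompact_of_finiteDimensional (M := M) (𝓡 n)
  obtain ⟨x, hx⟩ := ContMDiffMap.exists_forall_algHom_apply_eq_apply φ
  exact ⟨x, hx, fun y hy ↦ ContMDiffMap.eq_of_forall_apply_eq fun f ↦ (hy f).symm.trans (hx f)⟩
end

section
/- Existence and uniqueness of the base point: let M be a smooth manifold without boundary modeled on ℝ^n (finite-dimensional), Hausdorff and second countable, let A be a real Weil algebra, and let ψ : C^∞(M) → A be a unital ℝ-algebra homomorphism. Then there exists a unique point x ∈ M such that ψ(f) − f(x)·1_A is nilpotent for every f ∈ C^∞(M). -/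
/-!
Since every element of `A` is a constant plus a nilpotent, `A ⧸ nilradical A ≅ ℝ`, and composing
`ψ` with the resulting augmentation `A → ℝ` gives a character `χ` of `C^∞(M)` whose evaluation
points are exactly the base points of `ψ`. Every character of `C^∞(M)` is an evaluation: otherwise
each point carries a function `(f - χ f)²` of `ker χ` positive there, finitely many of them cover a
compact sublevel set of a proper smooth function `h`, and adding `(h - χ h)²` yields an everywhere
positive, hence invertible, element of `ker χ`. Uniqueness holds because smooth functions separate
points.
-/

open Set Function Topology
open scoped Manifold ContDiff

section Augmentation

variable {K A : Type*} [Field K] [CommRing A] [Algebra K A] [Nontrivial A]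

theorem bijective_algebraMap_quotient_nilradical
    (hA : ∀ a : A, ∃ c : K, IsNilpotent (a - algebraMap K A c)) :
    Bijective (algebraMap K (A ⧸ nilradical A)) := by
  have : Nontrivial (A ⧸ nilradical A) := Ideal.Quotient.nontrivial_iff.mpr <|
    (Ideal.ne_top_iff_one _).mpr fun h => not_isNilpotent_one (mem_nilradical.mp h)
  refine ⟨(algebraMap K _).injective, fun q => ?_⟩
  obtain ⟨a, rfl⟩ := Ideal.Quotient.mk_surjective q
  obtain ⟨c, hc⟩ := hA a
  exact ⟨c, (Ideal.Quotient.eq.mpr (mem_nilradical.mpr hc)).symm⟩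

noncomputable def augmentation (hA : ∀ a : A, ∃ c : K, IsNilpotent (a - algebraMap K A c)) :
    A →ₐ[K] K :=
  ((AlgEquiv.ofBijective (Algebra.ofId K _) (bijective_algebraMap_quotient_nilradical hA)).symm :
    A ⧸ nilradical A →ₐ[K] K).comp (Ideal.Quotient.mkₐ K (nilradical A))

theorem augmentation_eq_iff (hA : ∀ a : A, ∃ c : K, IsNilpotent (a - algebraMap K A c))
    {a : A} {c : K} : augmentation hA a = c ↔ IsNilpotent (a - algebraMap K A c) := by
  rw [augmentation, AlgHom.comp_apply, AlgEquiv.coe_toAlgHom, AlgEquiv.symm_apply_eq,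
    ← mem_nilradical, ← Ideal.Quotient.eq]
  exact Iff.rfl

end Augmentation

namespace ContMDiffMap

variable {E H : Type*} [NormedAddCommGroup E] [NormedSpace ℝ E] [TopologicalSpace H]
  {I : ModelWithCorners ℝ E H} {M : Type*} [TopologicalSpace M] [ChartedSpace H M] {k : ℕ∞}

@[simp]
theorem evalRingHom_apply (x : M) (f : C^k⟮I, M; ℝ⟯) : evalRingHom x f = f x := rfl

@[simp]
theorem algebraMap_apply (c : ℝ) (x : M) : algebraMap ℝ C^k⟮I, M; ℝ⟯ c x = c := rfl

theorem isUnit_of_forall_ne_zero_s5 (f : C^k⟮I, M; ℝ⟯) (hf : ∀ y, f y ≠ 0) : IsUnit f :=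
  IsUnit.of_mul_eq_one ⟨fun y => (f y)⁻¹, f.contMDiff.inv₀ hf⟩ <| by
    ext y; exact mul_inv_cancel₀ (hf y)

theorem ringHom_apply_algebraMap (φ : C^k⟮I, M; ℝ⟯ →+* ℝ) (c : ℝ) :
    φ (algebraMap ℝ C^k⟮I, M; ℝ⟯ c) = c :=
  RingHom.congr_fun (Subsingleton.elim (φ.comp (algebraMap ℝ _)) (RingHom.id ℝ)) c

theorem ringHom_apply_sq_sub_algebraMap (φ : C^k⟮I, M; ℝ⟯ →+* ℝ) (f : C^k⟮I, M; ℝ⟯) :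
    φ ((f - algebraMap ℝ _ (φ f)) ^ 2) = 0 := by
  rw [map_pow, map_sub, ringHom_apply_algebraMap, sub_self, zero_pow two_ne_zero]

theorem exists_ringHom_eq_zero_nonneg_pos_on (φ : C^k⟮I, M; ℝ⟯ →+* ℝ)
    (hφ : ∀ x, ∃ f : C^k⟮I, M; ℝ⟯, φ f ≠ f x) {L : Set M} (hL : IsCompact L) :
    ∃ g : C^k⟮I, M; ℝ⟯, φ g = 0 ∧ (∀ y, 0 ≤ g y) ∧ ∀ y ∈ L, 0 < g y := by
  choose f hf using hφ
  have hpos : ∀ x, 0 < (f x x - φ (f x)) ^ 2 := fun x =>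
    sq_pos_of_ne_zero (sub_ne_zero.2 (hf x).symm)
  obtain ⟨t, ht⟩ := hL.elim_finite_subcover (fun x => {y | 0 < (f x y - φ (f x)) ^ 2})
    (fun x => isOpen_lt continuous_const (((f x).contMDiff.continuous.sub continuous_const).pow 2))
    (fun y _ => mem_iUnion.mpr ⟨y, hpos y⟩)
  set g : C^k⟮I, M; ℝ⟯ := ∑ x ∈ t, (f x - algebraMap ℝ _ (φ (f x))) ^ 2
  have hg : ∀ y, g y = ∑ x ∈ t, (f x y - φ (f x)) ^ 2 := fun y => by
    change evalRingHom y g = _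
    simp [g]
  refine ⟨g, by simp [g, map_sum, ringHom_apply_sq_sub_algebraMap], fun y => ?_, fun y hy => ?_⟩
  · rw [hg]; positivity
  · obtain ⟨x, hxt, hxy⟩ := mem_iUnion₂.mp (ht hy)
    rw [hg]
    exact Finset.sum_pos' (fun _ _ => sq_nonneg _) ⟨x, hxt, hxy⟩

variable [FiniteDimensional ℝ E] [IsManifold I ∞ M] [T2Space M] [SigmaCompactSpace M]

variable (I M k) in
theorem exists_isCompact_setOf_le :
    ∃ h : C^k⟮I, M; ℝ⟯, ∀ c : ℝ, IsCompact {y | h y ≤ c} := by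
  have : LocallyCompactSpace H := I.locallyCompactSpace
  have : LocallyCompactSpace M := ChartedSpace.locallyCompactSpace H M
  let K := CompactExhaustion.choice M
  -- `h y` is at least the index of the first compact set of the exhaustion containing `y`.
  have hloc : ∀ x, ∃ c : ℝ, ∀ᶠ y in 𝓝 x, c ∈ Ici (K.find y : ℝ) := fun x =>
    ⟨K.find x + 1, Filter.eventually_of_mem
      (isOpen_interior.mem_nhds (K.subset_interior_succ _ (K.mem_find x))) fun y hy =>
        mem_Ici.2 <| by exact_mod_cast K.mem_iff_find_le.mp (interior_subset hy)⟩
  obtain ⟨h, hh⟩ := exists_contMDiffMap_forall_mem_convex_of_local_const I (n := k)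
    (fun _ => convex_Ici _) hloc
  refine ⟨h, fun c => (K.isCompact ⌊c⌋₊).of_isClosed_subset
    (isClosed_le h.contMDiff.continuous continuous_const) fun y hy => ?_⟩
  exact K.mem_iff_find_le.mpr (Nat.le_floor ((hh y).trans hy))

theorem exists_eq_evalRingHom (φ : C^k⟮I, M; ℝ⟯ →+* ℝ) : ∃ x, φ = evalRingHom x := by
  by_contra! hφ
  replace hφ : ∀ x, ∃ f : C^k⟮I, M; ℝ⟯, φ f ≠ f x := fun x => by
    simpa [RingHom.ext_iff] using hφ x
  obtain ⟨h, hh⟩ := exists_isCompact_setOf_le I M k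
  obtain ⟨g, hg0, hg_nonneg, hg_pos⟩ :=
    exists_ringHom_eq_zero_nonneg_pos_on φ hφ (hh (φ h + 1))
  set G : C^k⟮I, M; ℝ⟯ := (h - algebraMap ℝ _ (φ h)) ^ 2 + g
  have hG : ∀ y, 0 < G y := by
    intro y
    change 0 < (h y - φ h) ^ 2 + g y
    by_cases hy : h y ≤ φ h + 1
    · exact add_pos_of_nonneg_of_pos (sq_nonneg _) (hg_pos y hy)
    · exact add_pos_of_pos_of_nonneg (sq_pos_of_ne_zero (by linarith)) (hg_nonneg y)
  have hφG : φ G = 0 := by rw [map_add, ringHom_apply_sq_sub_algebraMap, hg0, add_zero]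
  exact not_isUnit_zero (hφG ▸ (isUnit_of_forall_ne_zero_s5 G fun y => (hG y).ne').map φ)

theorem evalRingHom_injective : Injective (evalRingHom : M → C^k⟮I, M; ℝ⟯ →+* ℝ) := by
  intro x y hxy
  by_contra hne
  obtain ⟨f, hfx, hfy, -⟩ := exists_contMDiffMap_zero_one_of_isClosed I (n := k)
    isClosed_singleton isClosed_singleton (disjoint_singleton.2 hne)
  have : f x = f y := RingHom.congr_fun hxy f
  rw [hfx rfl, hfy rfl] at this
  exact zero_ne_one this

end ContMDiffMap

theorem base_point_exists_unique_general {n : ℕ} {M : Type*} [TopologicalSpace M]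
    [ChartedSpace (EuclideanSpace ℝ (Fin n)) M]
    [IsManifold (𝓡 n) (⊤ : ℕ∞) M] [T2Space M] [SecondCountableTopology M]
    (A : Type*) [CommRing A] [Algebra ℝ A] [Nontrivial A]
    (hA : ∀ a : A, ∃ c : ℝ, IsNilpotent (a - algebraMap ℝ A c))
    (ψ : C^(⊤ : ℕ∞)⟮𝓡 n, M; ℝ⟯ →ₐ[ℝ] A) :
    ∃! x : M, ∀ f : C^(⊤ : ℕ∞)⟮𝓡 n, M; ℝ⟯,
      IsNilpotent (ψ f - algebraMap ℝ A (f x)) := by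
  have : LocallyCompactSpace M := ChartedSpace.locallyCompactSpace (EuclideanSpace ℝ (Fin n)) M
  let χ : C^(⊤ : ℕ∞)⟮𝓡 n, M; ℝ⟯ →+* ℝ := ((augmentation hA).comp ψ : _ →ₐ[ℝ] ℝ)
  have base_iff : ∀ x : M, (∀ f : C^(⊤ : ℕ∞)⟮𝓡 n, M; ℝ⟯,
      IsNilpotent (ψ f - algebraMap ℝ A (f x))) ↔ χ = ContMDiffMap.evalRingHom x := by
    intro x
    simp only [RingHom.ext_iff, ContMDiffMap.evalRingHom_apply, ← augmentation_eq_iff hA]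
    rfl
  obtain ⟨x, hx⟩ := ContMDiffMap.exists_eq_evalRingHom χ
  exact ⟨x, (base_iff x).2 hx,
    fun y hy => ContMDiffMap.evalRingHom_injective (((base_iff y).1 hy).symm.trans hx)⟩

/-- **Existence and uniqueness of the base point**: for every unital `ℝ`-algebra
homomorphism `ψ : C^∞(M) → A` into a real Weil algebra `A` there is a unique point
`x ∈ M` such that `ψ f - f x · 1` is nilpotent for every smooth function `f`. -/
theorem base_point_exists_unique {n : ℕ} {M : Type*} [TopologicalSpace M]
    [ChartedSpace (EuclideanSpace ℝ (Fin n)) M]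
    [IsManifold (𝓡 n) (⊤ : ℕ∞) M] [T2Space M] [SecondCountableTopology M]
    (A : Type*) [CommRing A] [Algebra ℝ A] [Nontrivial A] [FiniteDimensional ℝ A]
    (hA : ∀ a : A, ∃ c : ℝ, IsNilpotent (a - algebraMap ℝ A c))
    (ψ : C^(⊤ : ℕ∞)⟮𝓡 n, M; ℝ⟯ →ₐ[ℝ] A) :
    ∃! x : M, ∀ f : C^(⊤ : ℕ∞)⟮𝓡 n, M; ℝ⟯,
      IsNilpotent (ψ f - algebraMap ℝ A (f x)) :=
  base_point_exists_unique_general A hA ψ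
end

section
/- Locality of algebra homomorphisms into Weil algebras: let M be a smooth manifold without boundary modeled on ℝ^n (finite-dimensional), Hausdorff and second countable, let A be a real Weil algebra, let ψ : C^∞(M) → A be a unital ℝ-algebra homomorphism, and let x ∈ M be a base point of ψ, i.e. ψ(f) − f(x)·1_A is nilpotent for every f ∈ C^∞(M). If s ∈ C^∞(M) vanishes identically on some neighborhood of x, then ψ(s) = 0. -/
open scoped Manifold Topology ContDiff

/-! A smooth bump function `g` at `x` supported in `V` satisfies `g * s = 0` and `g x = 1`.
The base-point condition makes `ψ g - 1` nilpotent, so `ψ g` is a unit, and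
`ψ g * ψ s = ψ (g * s) = 0` forces `ψ s = 0`. -/

theorem IsNilpotent.eq_zero_of_mul_eq_zero {A : Type*} [Ring A] {a b : A}
    (ha : IsNilpotent (a - 1)) (hab : a * b = 0) : b = 0 := by
  have hunit : IsUnit a := by simpa using ha.isUnit_add_one
  exact hunit.mul_right_eq_zero.mp hab

theorem ContMDiffMap.exists_eq_one_support_subset {E : Type*} [NormedAddCommGroup E]
    [NormedSpace ℝ E] [FiniteDimensional ℝ E] {H : Type*} [TopologicalSpace H]
    (I : ModelWithCorners ℝ E H) {M : Type*} [TopologicalSpace M] [ChartedSpace H M]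
    [T2Space M] [IsManifold I ∞ M] {x : M} {V : Set M} (hV : V ∈ 𝓝 x) :
    ∃ g : C^∞⟮I, M; ℝ⟯, g x = 1 ∧ Function.support g ⊆ V := by
  obtain ⟨f, hfV, -⟩ := (SmoothBumpFunction.nhds_basis_support (I := I) hV).mem_iff.mp hV
  exact ⟨⟨f, f.contMDiff⟩, f.eq_one, subset_closure.trans hfV⟩

theorem algHom_apply_eq_zero_of_eventually_eq_zero_general {n : ℕ} {M : Type*} [TopologicalSpace M]
    [ChartedSpace (EuclideanSpace ℝ (Fin n)) M]
    [IsManifold (𝓡 n) (⊤ : ℕ∞) M] [T2Space M]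
    (A : Type*) [CommRing A] [Algebra ℝ A]
    (ψ : C^(⊤ : ℕ∞)⟮𝓡 n, M; ℝ⟯ →ₐ[ℝ] A) (x : M)
    (hx : ∀ f : C^(⊤ : ℕ∞)⟮𝓡 n, M; ℝ⟯, IsNilpotent (ψ f - algebraMap ℝ A (f x)))
    (s : C^(⊤ : ℕ∞)⟮𝓡 n, M; ℝ⟯) (V : Set M) (hV : V ∈ nhds x)
    (hs : ∀ y ∈ V, s y = 0) :
    ψ s = 0 := by
  obtain ⟨g, hgx, hgV⟩ := ContMDiffMap.exists_eq_one_support_subset (𝓡 n) hV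
  have hgs : g * s = 0 := by
    ext y
    by_cases hy : y ∈ V
    · simp [hs y hy]
    · simp [Function.notMem_support.mp (mt (@hgV y) hy)]
  refine IsNilpotent.eq_zero_of_mul_eq_zero (a := ψ g) ?_ (by rw [← map_mul, hgs, map_zero])
  simpa [hgx] using hx g

/-- **Locality**: a unital `ℝ`-algebra homomorphism `ψ : C^∞(M) → A` into a real Weil
algebra with base point `x` (i.e. `ψ f - f x · 1` is nilpotent for all `f`) kills every
smooth function vanishing identically on a neighborhood of `x`. -/
theorem algHom_apply_eq_zero_of_eventually_eq_zero {n : ℕ} {M : Type*} [TopologicalSpace M]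
    [ChartedSpace (EuclideanSpace ℝ (Fin n)) M]
    [IsManifold (𝓡 n) (⊤ : ℕ∞) M] [T2Space M] [SecondCountableTopology M]
    (A : Type*) [CommRing A] [Algebra ℝ A] [Nontrivial A] [FiniteDimensional ℝ A]
    (hA : ∀ a : A, ∃ c : ℝ, IsNilpotent (a - algebraMap ℝ A c))
    (ψ : C^(⊤ : ℕ∞)⟮𝓡 n, M; ℝ⟯ →ₐ[ℝ] A) (x : M)
    (hx : ∀ f : C^(⊤ : ℕ∞)⟮𝓡 n, M; ℝ⟯, IsNilpotent (ψ f - algebraMap ℝ A (f x)))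
    (s : C^(⊤ : ℕ∞)⟮𝓡 n, M; ℝ⟯) (V : Set M) (hV : V ∈ nhds x)
    (hs : ∀ y ∈ V, s y = 0) :
    ψ s = 0 :=
  algHom_apply_eq_zero_of_eventually_eq_zero_general A ψ x hx s V hV hs
end

section
/- Every real Weil algebra is a quotient of an algebra of smooth functions: for every real Weil algebra A there exist p, k ∈ ℕ and a surjective unital ℝ-algebra homomorphism ψ : C^∞(ℝ^p) → A whose kernel contains the k-th power I_0^k of the ideal I_0 of smooth functions vanishing at the origin 0 ∈ ℝ^p. -/
set_option synthInstance.maxHeartbeats 1000000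
set_option maxHeartbeats 1000000

section Aux
open Finset
variable {p : ℕ}

/-- Leibniz rule for iterated one-dimensional derivatives. -/
theorem iteratedDeriv_mul_leibniz {f g : ℝ → ℝ} (hf : ContDiff ℝ (⊤ : ℕ∞) f) (hg : ContDiff ℝ (⊤ : ℕ∞) g)
    (n : ℕ) (x : ℝ) :
    iteratedDeriv n (f * g) x =
      ∑ i ∈ range (n + 1), (n.choose i : ℝ) * iteratedDeriv i f x * iteratedDeriv (n - i) g x := by
  induction n generalizing x with
  | zero => simp [iteratedDeriv_zero]
  | succ n ih =>
    have hdf : ∀ m : ℕ, Differentiable ℝ (iteratedDeriv m f) :=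
      fun m => hf.differentiable_iteratedDeriv m (by exact_mod_cast lt_top_iff_ne_top.2 (by simp))
    have hdg : ∀ m : ℕ, Differentiable ℝ (iteratedDeriv m g) :=
      fun m => hg.differentiable_iteratedDeriv m (by exact_mod_cast lt_top_iff_ne_top.2 (by simp))
    have hrw : iteratedDeriv n (f * g) = fun y =>
        ∑ i ∈ range (n + 1), (n.choose i : ℝ) * iteratedDeriv i f y * iteratedDeriv (n - i) g y :=
      funext fun y => ih y
    rw [iteratedDeriv_succ, hrw]
    have hterm : ∀ i : ℕ, ∀ y : ℝ,
        HasDerivAt (fun z => (n.choose i : ℝ) * iteratedDeriv i f z * iteratedDeriv (n - i) g z)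
          ((n.choose i : ℝ) * (iteratedDeriv (i+1) f y * iteratedDeriv (n - i) g y
            + iteratedDeriv i f y * iteratedDeriv (n - i + 1) g y)) y := by
      intro i y
      have h1 : HasDerivAt (iteratedDeriv i f) (iteratedDeriv (i+1) f y) y := by
        rw [iteratedDeriv_succ]; exact ((hdf i) y).hasDerivAt
      have h2 : HasDerivAt (iteratedDeriv (n-i) g) (iteratedDeriv (n-i+1) g y) y := by
        rw [iteratedDeriv_succ]; exact ((hdg (n-i)) y).hasDerivAt
      have h3 : (fun z => (n.choose i : ℝ) * iteratedDeriv i f z * iteratedDeriv (n - i) g z)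
          = (fun z => (n.choose i : ℝ) * (iteratedDeriv i f z * iteratedDeriv (n - i) g z)) :=
        funext fun z => mul_assoc _ _ _
      rw [h3]
      exact (h1.mul h2).const_mul (n.choose i : ℝ)
    have hsum : ∀ y : ℝ, HasDerivAt (fun z => ∑ i ∈ range (n + 1),
        (n.choose i : ℝ) * iteratedDeriv i f z * iteratedDeriv (n - i) g z)
        (∑ i ∈ range (n + 1), (n.choose i : ℝ) * (iteratedDeriv (i+1) f y * iteratedDeriv (n - i) g y
            + iteratedDeriv i f y * iteratedDeriv (n - i + 1) g y)) y :=
      fun y => HasDerivAt.fun_sum (fun i _ => hterm i y)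
    rw [(hsum x).deriv]
    -- now the combinatorial identity
    have expand : ∑ i ∈ range (n + 1), (n.choose i : ℝ) *
        (iteratedDeriv (i+1) f x * iteratedDeriv (n - i) g x
          + iteratedDeriv i f x * iteratedDeriv (n - i + 1) g x)
        = (∑ i ∈ range (n + 1), (n.choose i : ℝ) * iteratedDeriv (i+1) f x * iteratedDeriv (n - i) g x)
          + ∑ i ∈ range (n + 1), (n.choose i : ℝ) * iteratedDeriv i f x * iteratedDeriv (n + 1 - i) g x := by
      rw [← Finset.sum_add_distrib]
      refine Finset.sum_congr rfl fun i hi => ?_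
      rw [Finset.mem_range] at hi
      have : n - i + 1 = n + 1 - i := by omega
      rw [this]; ring
    rw [expand]
    have peel : ∑ i ∈ range (n + 1 + 1), ((n+1).choose i : ℝ) * iteratedDeriv i f x * iteratedDeriv (n + 1 - i) g x
        = (∑ i ∈ range (n + 1), ((n+1).choose (i+1) : ℝ) * iteratedDeriv (i+1) f x * iteratedDeriv (n - i) g x)
          + iteratedDeriv 0 f x * iteratedDeriv (n+1) g x := by
      rw [Finset.sum_range_succ']
      simp only [Nat.choose_zero_right, Nat.cast_one, one_mul, Nat.sub_zero]
      congr 1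
      refine Finset.sum_congr rfl fun i hi => ?_
      rw [Finset.mem_range] at hi
      have : n + 1 - (i + 1) = n - i := by omega
      rw [this]
    rw [peel]
    have pascal : ∀ i, ((n+1).choose (i+1) : ℝ) = (n.choose i : ℝ) + (n.choose (i+1) : ℝ) := by
      intro i; rw [Nat.choose_succ_succ]; push_cast; ring
    have split : ∑ i ∈ range (n + 1), ((n+1).choose (i+1) : ℝ) * iteratedDeriv (i+1) f x * iteratedDeriv (n - i) g x
        = (∑ i ∈ range (n + 1), (n.choose i : ℝ) * iteratedDeriv (i+1) f x * iteratedDeriv (n - i) g x)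
          + ∑ i ∈ range (n + 1), (n.choose (i+1) : ℝ) * iteratedDeriv (i+1) f x * iteratedDeriv (n - i) g x := by
      rw [← Finset.sum_add_distrib]
      exact Finset.sum_congr rfl fun i hi => by rw [pascal i]; ring
    rw [split]
    have shift : ∑ i ∈ range (n + 1), (n.choose (i+1) : ℝ) * iteratedDeriv (i+1) f x * iteratedDeriv (n - i) g x
          + iteratedDeriv 0 f x * iteratedDeriv (n+1) g x
        = ∑ i ∈ range (n + 1), (n.choose i : ℝ) * iteratedDeriv i f x * iteratedDeriv (n + 1 - i) g x := by
      rw [Finset.sum_range_succ, Nat.choose_succ_self, Nat.cast_zero, zero_mul, zero_mul, add_zero,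
        Finset.sum_range_succ']
      simp only [Nat.choose_zero_right, Nat.cast_one, one_mul, Nat.sub_zero]
      congr 1
      refine Finset.sum_congr rfl fun i hi => ?_
      rw [Finset.mem_range] at hi
      have : n + 1 - (i + 1) = n - i := by omega
      rw [this]
    rw [add_assoc, shift]

theorem iteratedDeriv_add' {f g : ℝ → ℝ} {j : ℕ} (hf : ContDiff ℝ (j:ℕ) f)
    (hg : ContDiff ℝ (j:ℕ) g) (x : ℝ) :
    iteratedDeriv j (f + g) x = iteratedDeriv j f x + iteratedDeriv j g x := by
  rw [iteratedDeriv_eq_iteratedFDeriv, iteratedDeriv_eq_iteratedFDeriv,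
    iteratedDeriv_eq_iteratedFDeriv, iteratedFDeriv_add_apply hf.contDiffAt hg.contDiffAt,
    ContinuousMultilinearMap.add_apply]

variable {p : ℕ}

/-- the line `t ↦ t • y` as a continuous linear map -/
noncomputable def lineCLM (y : Fin p → ℝ) : ℝ →L[ℝ] (Fin p → ℝ) :=
  ContinuousLinearMap.smulRight (ContinuousLinearMap.id ℝ ℝ) y

lemma lineCLM_apply (y : Fin p → ℝ) (t : ℝ) : lineCLM y t = t • y := rfl

lemma iteratedDeriv_line (f : (Fin p → ℝ) → ℝ) (hf : ContDiff ℝ (⊤ : ℕ∞) f) (j : ℕ) (y : Fin p → ℝ) :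
    iteratedDeriv j (fun t : ℝ => f (t • y)) 0 = iteratedFDeriv ℝ j f 0 (fun _ => y) := by
  have h1 : (fun t : ℝ => f (t • y)) = f ∘ (lineCLM y) := rfl
  rw [iteratedDeriv_eq_iteratedFDeriv, h1,
    ContinuousLinearMap.iteratedFDeriv_comp_right (lineCLM y) hf 0
      (by exact_mod_cast (le_top : (j : ℕ∞) ≤ ⊤))]
  rw [ContinuousMultilinearMap.compContinuousLinearMap_apply]
  simp [lineCLM_apply]

lemma multilinear_expand {j : ℕ} (M : ContinuousMultilinearMap ℝ (fun _ : Fin j => (Fin p → ℝ)) ℝ)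
    (y : Fin p → ℝ) :
    M (fun _ => y) = ∑ d : Fin j → Fin p,
      (∏ l, y (d l)) * M (fun l => Pi.single (d l) 1) := by
  have hy0 : y = ∑ i : Fin p, y i • (Pi.single i (1:ℝ) : Fin p → ℝ) := by
    funext j'
    rw [Finset.sum_apply]
    simp [Pi.single_apply, mul_ite, Finset.sum_ite_eq']
  have hy : (fun _ : Fin j => y)
      = fun _ : Fin j => ∑ i : Fin p, y i • (Pi.single i (1:ℝ) : Fin p → ℝ) :=
    funext fun _ => hy0
  have hms : M (fun _ : Fin j => ∑ i : Fin p, y i • (Pi.single i (1:ℝ) : Fin p → ℝ))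
      = ∑ d : Fin j → Fin p, M (fun l => y (d l) • (Pi.single (d l) (1:ℝ) : Fin p → ℝ)) :=
    M.toMultilinearMap.map_sum (g := fun _ i => y i • (Pi.single i (1:ℝ) : Fin p → ℝ))
  rw [hy, hms]
  refine Finset.sum_congr rfl fun d _ => ?_
  have hsm : M (fun l => y (d l) • (Pi.single (d l) (1:ℝ) : Fin p → ℝ))
      = (∏ l, y (d l)) • M (fun l => (Pi.single (d l) (1:ℝ) : Fin p → ℝ)) :=
    M.toMultilinearMap.map_smul_univ (fun l => y (d l)) (fun l => Pi.single (d l) (1:ℝ))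
  rw [hsm, smul_eq_mul]

lemma iteratedDeriv_const_fun (c : ℝ) (j : ℕ) (x : ℝ) :
    iteratedDeriv j (fun _ : ℝ => c) x = if j = 0 then c else 0 := by
  induction j generalizing c x with
  | zero => simp
  | succ m ih =>
    rw [iteratedDeriv_succ']
    have h : deriv (fun _ : ℝ => c) = fun _ : ℝ => (0:ℝ) := funext fun t => deriv_const t c
    rw [h, ih 0 x]
    simp

lemma iteratedDeriv_linear (c : ℝ) (j : ℕ) :
    iteratedDeriv j (fun t : ℝ => t * c) 0 = if j = 0 then 0 else if j = 1 then c else 0 := by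
  match j with
  | 0 => simp
  | 1 => rw [iteratedDeriv_one]; simp [(hasDerivAt_mul_const c).deriv]
  | (m+2) =>
    rw [iteratedDeriv_succ']
    have h : deriv (fun t : ℝ => t * c) = fun _ : ℝ => c :=
      funext fun t => (hasDerivAt_mul_const c).deriv
    rw [h, iteratedDeriv_const_fun]
    simp

open MvPolynomial in
/-- The degree-`j` Taylor coefficient of `f` at `0`, as a multivariate polynomial. -/
noncomputable def Tcoef (f : (Fin p → ℝ) → ℝ) (j : ℕ) : MvPolynomial (Fin p) ℝ :=
  (j.factorial : ℝ)⁻¹ • ∑ d : Fin j → Fin p,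
    MvPolynomial.C (iteratedFDeriv ℝ j f 0 (fun l => Pi.single (d l) 1)) * ∏ l, MvPolynomial.X (d l)

lemma eval_Tcoef {f : (Fin p → ℝ) → ℝ} (hf : ContDiff ℝ (⊤ : ℕ∞) f) (j : ℕ) (y : Fin p → ℝ) :
    MvPolynomial.eval y (Tcoef f j)
      = (j.factorial : ℝ)⁻¹ * iteratedDeriv j (fun t : ℝ => f (t • y)) 0 := by
  rw [Tcoef, MvPolynomial.smul_eval, iteratedDeriv_line f hf j y, multilinear_expand]
  congr 1
  rw [map_sum]
  refine Finset.sum_congr rfl fun d _ => ?_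
  rw [map_mul, MvPolynomial.eval_C, map_prod]
  simp only [MvPolynomial.eval_X]
  ring

lemma line_contDiff {f : (Fin p → ℝ) → ℝ} (hf : ContDiff ℝ (⊤ : ℕ∞) f) (y : Fin p → ℝ) :
    ContDiff ℝ (⊤ : ℕ∞) (fun t : ℝ => f (t • y)) :=
  hf.comp (lineCLM y).contDiff

lemma Tcoef_zero_eq {f : (Fin p → ℝ) → ℝ} (hf : ContDiff ℝ (⊤ : ℕ∞) f) :
    Tcoef f 0 = MvPolynomial.C (f 0) := by
  apply MvPolynomial.funext
  intro y
  rw [eval_Tcoef hf, MvPolynomial.eval_C, iteratedDeriv_zero]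
  simp

lemma Tcoef_const (c : ℝ) (j : ℕ) (hj : j ≠ 0) :
    Tcoef (fun _ : Fin p → ℝ => c) j = 0 := by
  apply MvPolynomial.funext
  intro y
  rw [eval_Tcoef contDiff_const j y]
  simp [iteratedDeriv_const_fun, hj]

lemma Tcoef_add {f g : (Fin p → ℝ) → ℝ} (hf : ContDiff ℝ (⊤ : ℕ∞) f) (hg : ContDiff ℝ (⊤ : ℕ∞) g) (j : ℕ) :
    Tcoef (f + g) j = Tcoef f j + Tcoef g j := by
  apply MvPolynomial.funext
  intro y
  have h1 : (fun t : ℝ => (f + g) (t • y))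
      = (fun t : ℝ => f (t • y)) + fun t : ℝ => g (t • y) := rfl
  have hfg : ContDiff ℝ (⊤ : ℕ∞) (f + g) := hf.add hg
  rw [eval_Tcoef hfg, MvPolynomial.eval_add, eval_Tcoef hf, eval_Tcoef hg, h1,
    iteratedDeriv_add' ((line_contDiff hf y).of_le (by exact_mod_cast le_top))
      ((line_contDiff hg y).of_le (by exact_mod_cast le_top))]
  ring

lemma Tcoef_mul {f g : (Fin p → ℝ) → ℝ} (hf : ContDiff ℝ (⊤ : ℕ∞) f) (hg : ContDiff ℝ (⊤ : ℕ∞) g) (j : ℕ) :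
    Tcoef (f * g) j = ∑ i ∈ range (j + 1), Tcoef f i * Tcoef g (j - i) := by
  apply MvPolynomial.funext
  intro y
  have h1 : (fun t : ℝ => (f * g) (t • y))
      = (fun t : ℝ => f (t • y)) * fun t : ℝ => g (t • y) := rfl
  have hfg : ContDiff ℝ (⊤ : ℕ∞) (f * g) := hf.mul hg
  rw [eval_Tcoef hfg, h1,
    iteratedDeriv_mul_leibniz (line_contDiff hf y) (line_contDiff hg y), MvPolynomial.eval_sum,
    Finset.mul_sum]
  refine Finset.sum_congr rfl fun i hi => ?_
  rw [Finset.mem_range] at hi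
  rw [MvPolynomial.eval_mul, eval_Tcoef hf, eval_Tcoef hg]
  have hfact : ((j.factorial : ℝ))⁻¹ * (j.choose i : ℝ)
      = (i.factorial : ℝ)⁻¹ * ((j - i).factorial : ℝ)⁻¹ := by
    have h := Nat.choose_mul_factorial_mul_factorial (Nat.lt_succ_iff.1 hi)
    field_simp
    push_cast [← h]
    ring
  calc (j.factorial : ℝ)⁻¹ * ((j.choose i : ℝ) * iteratedDeriv i (fun t : ℝ => f (t • y)) 0
        * iteratedDeriv (j - i) (fun t : ℝ => g (t • y)) 0)
      = ((j.factorial : ℝ)⁻¹ * (j.choose i : ℝ)) * iteratedDeriv i (fun t : ℝ => f (t • y)) 0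
        * iteratedDeriv (j - i) (fun t : ℝ => g (t • y)) 0 := by ring
    _ = _ := by rw [hfact]; ring

lemma Tcoef_coord (i : Fin p) (j : ℕ) :
    Tcoef (fun x : Fin p → ℝ => x i) j = if j = 1 then MvPolynomial.X i else 0 := by
  have hsm : ContDiff ℝ (⊤ : ℕ∞) (fun x : Fin p → ℝ => x i) := (ContinuousLinearMap.proj (R := ℝ) (φ := fun _ : Fin p => ℝ) i).contDiff
  apply MvPolynomial.funext
  intro y
  have h1 : (fun t : ℝ => (t • y) i) = fun t : ℝ => t * y i := by
    funext t; simp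
  rw [eval_Tcoef hsm, h1, iteratedDeriv_linear]
  match j with
  | 0 => simp
  | 1 => simp
  | (m+2) => simp

end Aux

/-- The algebra `C^∞(ℝ^p)` of smooth real-valued functions on `ℝ^p`. -/
def SmoothFn (p : ℕ) : Subalgebra ℝ ((Fin p → ℝ) → ℝ) where
  carrier := {f | ContDiff ℝ (⊤ : ℕ∞) f}
  mul_mem' := fun {f g} (hf : ContDiff ℝ (⊤ : ℕ∞) f) (hg : ContDiff ℝ (⊤ : ℕ∞) g) =>
    Set.mem_setOf_eq ▸ hf.mul hg
  add_mem' := fun {f g} (hf : ContDiff ℝ (⊤ : ℕ∞) f) (hg : ContDiff ℝ (⊤ : ℕ∞) g) =>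
    Set.mem_setOf_eq ▸ hf.add hg
  algebraMap_mem' := fun r => (contDiff_const : ContDiff ℝ (⊤ : ℕ∞) fun _ => r)

/-- Evaluation at a point `x ∈ ℝ^p`, as an `ℝ`-algebra homomorphism `C^∞(ℝ^p) → ℝ`. -/
noncomputable def SmoothFn.evalAlgHom (p : ℕ) (x : Fin p → ℝ) : SmoothFn p →ₐ[ℝ] ℝ :=
  (Pi.evalAlgHom ℝ (fun _ : Fin p → ℝ => ℝ) x).comp (SmoothFn p).val

/-- **Every real Weil algebra is a quotient of an algebra of smooth functions**: there
are `p, k` and a surjective unital `ℝ`-algebra homomorphism `ψ : C^∞(ℝ^p) → A` whose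
kernel contains the `k`-th power of the ideal `I_0` of smooth functions vanishing at the
origin `0 ∈ ℝ^p`. -/
theorem weil_algebra_quotient_of_smooth_functions
    (A : Type*) [CommRing A] [Algebra ℝ A] [Nontrivial A] [FiniteDimensional ℝ A]
    (hA : ∀ a : A, ∃ c : ℝ, IsNilpotent (a - algebraMap ℝ A c)) :
    ∃ (p k : ℕ) (ψ : SmoothFn p →ₐ[ℝ] A),
      Function.Surjective ψ ∧
      (RingHom.ker (SmoothFn.evalAlgHom p 0).toRingHom) ^ k ≤ RingHom.ker ψ.toRingHom := by
  classical
  have hNoeth : IsNoetherianRing A := isNoetherian_of_tower ℝ inferInstance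
  obtain ⟨k₀, hk₀⟩ := IsNoetherianRing.isNilpotent_nilradical A
  set k : ℕ := k₀ + 2 with hk
  have hnil : nilradical A ^ k = ⊥ := by
    rw [hk, pow_add, hk₀, zero_mul]
    rfl
  set V : Submodule ℝ A := Submodule.restrictScalars ℝ (nilradical A) with hV
  set q : ℕ := Module.finrank ℝ V with hq
  set b : Module.Basis (Fin q) ℝ V := Module.finBasis ℝ V with hb
  set nB : Fin q → A := fun i => (b i : A) with hnB
  have hnmem : ∀ i, nB i ∈ nilradical A := fun i => (b i).2
  have hspan : ∀ a : A, a ∈ nilradical A → ∃ c : Fin q → ℝ, a = ∑ i, c i • nB i := by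
    intro a ha
    refine ⟨fun i => b.repr ⟨a, ha⟩ i, ?_⟩
    have h := b.sum_repr ⟨a, ha⟩
    have h3 : a = V.subtype (∑ i, b.repr ⟨a, ha⟩ i • b i) := by rw [h]; rfl
    refine h3.trans ?_
    rw [map_sum]
    exact Finset.sum_congr rfl fun i _ => by rw [map_smul]; rfl
  have hsmooth : ∀ f : SmoothFn q, ContDiff ℝ (⊤ : ℕ∞) f.1 := fun f => f.2
  set Ψ : SmoothFn q → A :=
    (fun f => MvPolynomial.aeval nB (∑ j ∈ Finset.range k, Tcoef f.1 j)) with hΨ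
  -- degree bound for the images of the Taylor coefficients
  have hMdeg : ∀ (f : (Fin q → ℝ) → ℝ) (j : ℕ),
      MvPolynomial.aeval nB (Tcoef f j) ∈ nilradical A ^ j := by
    intro f j
    have hprod : ∀ d : Fin j → Fin q, ∏ l, nB (d l) ∈ nilradical A ^ j := by
      intro d
      have h := Ideal.prod_mem_prod (s := Finset.univ) (I := fun _ : Fin j => nilradical A)
        (x := fun l => nB (d l)) (fun l _ => hnmem (d l))
      simpa [Finset.prod_const, Finset.card_univ] using h
    rw [Tcoef, MvPolynomial.smul_eq_C_mul, map_mul, MvPolynomial.aeval_C, map_sum]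
    refine Ideal.mul_mem_left _ _ (Submodule.sum_mem _ fun d _ => ?_)
    rw [map_mul, MvPolynomial.aeval_C, map_prod]
    simp only [MvPolynomial.aeval_X]
    exact Ideal.mul_mem_left _ _ (hprod d)
  have hconst : ∀ c : ℝ,
      ∑ j ∈ Finset.range k, Tcoef (fun _ : Fin q → ℝ => c) j = MvPolynomial.C c := by
    intro c
    rw [Finset.sum_eq_single_of_mem 0 (Finset.mem_range.2 (by omega))
      (fun j _ hj => Tcoef_const c j hj)]
    exact Tcoef_zero_eq contDiff_const
  have hcomm : ∀ c : ℝ, Ψ ((algebraMap ℝ (SmoothFn q)) c) = algebraMap ℝ A c := by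
    intro c
    have h1 : ((algebraMap ℝ (SmoothFn q)) c).1 = fun _ : Fin q → ℝ => c := rfl
    rw [hΨ]
    simp only [h1, hconst c, MvPolynomial.aeval_C]
  have hadd : ∀ f g : SmoothFn q, Ψ (f + g) = Ψ f + Ψ g := by
    intro f g
    have h1 : ((f + g : SmoothFn q)).1 = f.1 + g.1 := rfl
    rw [hΨ]
    simp only [h1]
    rw [show (∑ j ∈ Finset.range k, Tcoef (f.1 + g.1) j)
        = ∑ j ∈ Finset.range k, (Tcoef f.1 j + Tcoef g.1 j) from
      Finset.sum_congr rfl fun j _ => Tcoef_add (hsmooth f) (hsmooth g) j]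
    rw [Finset.sum_add_distrib, map_add]
  have hdead : ∀ (f g : SmoothFn q) (a b' : ℕ), k ≤ a + b' →
      MvPolynomial.aeval nB (Tcoef f.1 a) * MvPolynomial.aeval nB (Tcoef g.1 b') = 0 := by
    intro f g a b' hab
    have h1 := Ideal.mul_mem_mul (hMdeg f.1 a) (hMdeg g.1 b')
    rw [← pow_add] at h1
    have h2 : nilradical A ^ (a + b') ≤ ⊥ := le_trans (Ideal.pow_le_pow_right hab) hnil.le
    simpa using h2 h1
  have hmul : ∀ f g : SmoothFn q, Ψ (f * g) = Ψ f * Ψ g := by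
    intro f g
    have h1 : ((f * g : SmoothFn q)).1 = f.1 * g.1 := rfl
    set G : ℕ × ℕ → A := fun ab =>
      MvPolynomial.aeval nB (Tcoef f.1 ab.1) * MvPolynomial.aeval nB (Tcoef g.1 ab.2) with hG
    have lhs_eq : Ψ (f * g) = ∑ j ∈ Finset.range k, ∑ i ∈ Finset.range (j+1), G (i, j - i) := by
      rw [hΨ]
      simp only [h1]
      rw [show (∑ j ∈ Finset.range k, Tcoef (f.1 * g.1) j)
          = ∑ j ∈ Finset.range k, ∑ i ∈ Finset.range (j+1), Tcoef f.1 i * Tcoef g.1 (j - i) from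
        Finset.sum_congr rfl fun j _ => Tcoef_mul (hsmooth f) (hsmooth g) j]
      simp only [map_sum, map_mul, hG]
    have rhs_eq : Ψ f * Ψ g = ∑ ab ∈ Finset.range k ×ˢ Finset.range k, G ab := by
      rw [hΨ]
      simp only [map_sum]
      rw [Finset.sum_mul_sum, ← Finset.sum_product']
    have hsplit : ∑ ab ∈ Finset.range k ×ˢ Finset.range k, G ab
        = ∑ ab ∈ (Finset.range k ×ˢ Finset.range k).filter (fun ab => ab.1 + ab.2 < k), G ab := by
      rw [← Finset.sum_filter_add_sum_filter_not (Finset.range k ×ˢ Finset.range k)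
        (fun ab => ab.1 + ab.2 < k) G]
      have : ∑ ab ∈ (Finset.range k ×ˢ Finset.range k).filter
          (fun ab => ¬ ab.1 + ab.2 < k), G ab = 0 :=
        Finset.sum_eq_zero fun ab hab => by
          rw [Finset.mem_filter] at hab
          exact hdead f g ab.1 ab.2 (by omega)
      rw [this, add_zero]
    have hreindex : ∑ j ∈ Finset.range k, ∑ i ∈ Finset.range (j+1), G (i, j - i)
        = ∑ ab ∈ (Finset.range k ×ˢ Finset.range k).filter (fun ab => ab.1 + ab.2 < k), G ab := by
      rw [Finset.sum_sigma']
      refine Finset.sum_nbij' (fun x => (x.2, x.1 - x.2)) (fun ab => ⟨ab.1 + ab.2, ab.1⟩)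
        ?_ ?_ ?_ ?_ ?_
      · intro x hx
        simp only [Finset.mem_sigma, Finset.mem_range] at hx
        simp only [Finset.mem_filter, Finset.mem_product, Finset.mem_range]
        omega
      · intro ab hab
        simp only [Finset.mem_filter, Finset.mem_product, Finset.mem_range] at hab
        simp only [Finset.mem_sigma, Finset.mem_range]
        omega
      · rintro ⟨j', i'⟩ hx
        simp only [Finset.mem_sigma, Finset.mem_range] at hx
        have h1 : i' + (j' - i') = j' := by omega
        simp [h1]
      · rintro ⟨a1, a2⟩ hab
        simp only [Finset.mem_filter, Finset.mem_product, Finset.mem_range] at hab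
        have h2 : a1 + a2 - a1 = a2 := by omega
        simp [h2]
      · intro x hx
        rfl
    rw [lhs_eq, rhs_eq, hsplit, hreindex]
  have hone : Ψ 1 = 1 := by
    have h := hcomm 1
    rw [map_one, map_one] at h
    exact h
  have hzero : Ψ 0 = 0 := by
    have h := hcomm 0
    rw [map_zero, map_zero] at h
    exact h
  set ψ : SmoothFn q →ₐ[ℝ] A :=
    ⟨⟨⟨⟨Ψ, hone⟩, hmul⟩, hzero, hadd⟩, hcomm⟩ with hψ
  have hψ_apply : ∀ f, ψ f = Ψ f := fun f => rfl
  -- the coordinate functions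
  have hmemproj : ∀ i : Fin q, (fun x : Fin q → ℝ => x i) ∈ SmoothFn q := fun i =>
    ((ContinuousLinearMap.proj (R := ℝ) (φ := fun _ : Fin q => ℝ) i).contDiff :
      ContDiff ℝ (⊤ : ℕ∞) fun x : Fin q → ℝ => x i)
  have hcoord : ∀ i : Fin q,
      ψ ⟨fun x => x i, hmemproj i⟩ = nB i := by
    intro i
    rw [hψ_apply, hΨ]
    simp only []
    rw [show (∑ j ∈ Finset.range k, Tcoef (fun x : Fin q → ℝ => x i) j) = MvPolynomial.X i from ?_]
    · exact MvPolynomial.aeval_X nB i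
    · rw [Finset.sum_eq_single_of_mem 1 (Finset.mem_range.2 (by omega))
        (fun j _ hj => by rw [Tcoef_coord, if_neg hj])]
      rw [Tcoef_coord, if_pos rfl]
  -- surjectivity
  have hsurj : Function.Surjective ψ := by
    intro a
    obtain ⟨c, hc⟩ := hA a
    obtain ⟨cs, hcs⟩ := hspan _ (mem_nilradical.2 hc)
    refine ⟨algebraMap ℝ (SmoothFn q) c
      + ∑ i, cs i • ⟨fun x => x i, hmemproj i⟩, ?_⟩
    rw [map_add, map_sum, AlgHom.commutes]
    have : ∀ i ∈ Finset.univ, ψ (cs i • (⟨fun x => x i,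
        hmemproj i⟩ : SmoothFn q)) = cs i • nB i := by
      intro i _
      rw [map_smul, hcoord i]
    rw [Finset.sum_congr rfl this, ← hcs]
    ring
  -- kernel
  have hker0 : ∀ f : SmoothFn q, f.1 0 = 0 → ψ f ∈ nilradical A := by
    intro f hf0
    rw [hψ_apply, hΨ]
    simp only []
    rw [map_sum]
    refine Submodule.sum_mem _ fun j hj => ?_
    match j with
    | 0 =>
      rw [Tcoef_zero_eq (hsmooth f), hf0, map_zero, map_zero]
      exact Submodule.zero_mem _
    | (m+1) =>
      exact Ideal.pow_le_self (Nat.succ_ne_zero m) (hMdeg f.1 (m+1))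
  refine ⟨q, k, ψ, hsurj, ?_⟩
  intro x hx
  have hmap : Ideal.map ψ.toRingHom
      ((RingHom.ker (SmoothFn.evalAlgHom q 0).toRingHom) ^ k) ≤ ⊥ := by
    rw [Ideal.map_pow]
    refine le_trans (Ideal.pow_right_mono ?_ k) hnil.le
    rw [Ideal.map_le_iff_le_comap]
    intro f hf
    have hf0 : f.1 0 = 0 := hf
    exact hker0 f hf0
  have := hmap (Ideal.mem_map_of_mem _ hx)
  rw [RingHom.mem_ker]
  simpa using this
end

section
/- Directedness of Weil algebras: let 𝕂 be a field. For any two Weil algebras A_1 and A_2 over 𝕂 there exist a Weil algebra A over 𝕂 and surjective unital 𝕂-algebra homomorphisms A → A_1 and A → A_2. -/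
universe u v w

open scoped TensorProduct

/-! The tensor product `A₁ ⊗[𝕂] A₂` does the job. Elements that are scalars modulo nilpotents
form a subalgebra `𝕂 + nil(A)`, the preimage of the image of `𝕂` in `A ⧸ nil(A)`; it is preserved by
algebra maps, so for `A₁ ⊗ A₂` it contains both `A₁ ⊗ 1` and `1 ⊗ A₂` and hence everything. For a
Weil algebra, `𝕂 → A ⧸ nil(A)` is an isomorphism, which yields a residue map `A → 𝕂`; the surjection
onto `A₁` is then `a ⊗ b ↦ a * ε₂(b)`, and symmetrically onto `A₂`. -/

section ScalarsAddNilradical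

variable (R A : Type*) [CommRing R] [CommRing A] [Algebra R A]

def scalarsAddNilradical : Subalgebra R A :=
  (Algebra.ofId R (A ⧸ nilradical A)).range.comap (Ideal.Quotient.mkₐ R (nilradical A))

variable {R A}

theorem mem_scalarsAddNilradical {a : A} :
    a ∈ scalarsAddNilradical R A ↔ ∃ c : R, IsNilpotent (a - algebraMap R A c) := by
  simp only [scalarsAddNilradical, Subalgebra.mem_comap, AlgHom.mem_range,
    Ideal.Quotient.mkₐ_eq_mk, Algebra.ofId_apply, ← Ideal.Quotient.mk_algebraMap,
    Ideal.Quotient.eq, mem_nilradical]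
  simp_rw [← isNilpotent_neg_iff (x := algebraMap R A _ - a), neg_sub]

theorem scalarsAddNilradical_eq_top_iff :
    scalarsAddNilradical R A = ⊤ ↔ ∀ a : A, ∃ c : R, IsNilpotent (a - algebraMap R A c) := by
  simp only [Algebra.eq_top_iff, mem_scalarsAddNilradical]

theorem AlgHom.map_mem_scalarsAddNilradical {B : Type*} [CommRing B] [Algebra R B]
    (f : A →ₐ[R] B) {a : A} (ha : a ∈ scalarsAddNilradical R A) :
    f a ∈ scalarsAddNilradical R B := by
  obtain ⟨c, hc⟩ := mem_scalarsAddNilradical.mp ha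
  exact mem_scalarsAddNilradical.mpr ⟨c, by simpa using hc.map f⟩

theorem scalarsAddNilradical_tensorProduct_eq_top {B : Type*} [CommRing B] [Algebra R B]
    (hA : scalarsAddNilradical R A = ⊤) (hB : scalarsAddNilradical R B = ⊤) :
    scalarsAddNilradical R (A ⊗[R] B) = ⊤ := by
  have hrange : (Algebra.TensorProduct.includeLeft : A →ₐ[R] A ⊗[R] B).range ⊔
      (Algebra.TensorProduct.includeRight : B →ₐ[R] A ⊗[R] B).range = ⊤ := by
    simpa [Algebra.TensorProduct.map_id] using
      (Algebra.TensorProduct.map_range (AlgHom.id R A) (AlgHom.id R B)).symm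
  rw [eq_top_iff, ← hrange, sup_le_iff]
  constructor
  · rintro _ ⟨a, rfl⟩
    exact AlgHom.map_mem_scalarsAddNilradical (B := A ⊗[R] B) _ (Algebra.eq_top_iff.mp hA a)
  · rintro _ ⟨b, rfl⟩
    exact AlgHom.map_mem_scalarsAddNilradical (B := A ⊗[R] B) _ (Algebra.eq_top_iff.mp hB b)

end ScalarsAddNilradical

section Residue

variable {𝕂 A : Type*} [Field 𝕂] [CommRing A] [Algebra 𝕂 A] [Nontrivial A]

theorem algebraMap_quotient_nilradical_bijective (h : scalarsAddNilradical 𝕂 A = ⊤) :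
    Function.Bijective (algebraMap 𝕂 (A ⧸ nilradical A)) := by
  have : Nontrivial (A ⧸ nilradical A) :=
    Ideal.Quotient.nontrivial_iff.mpr (by simp [nilradical, Ideal.radical_eq_top])
  refine ⟨(algebraMap 𝕂 _).injective, fun x ↦ ?_⟩
  obtain ⟨a, rfl⟩ := Ideal.Quotient.mk_surjective x
  exact Algebra.eq_top_iff.mp h a

noncomputable def residueAlgHom (h : scalarsAddNilradical 𝕂 A = ⊤) : A →ₐ[𝕂] 𝕂 :=
  ((AlgEquiv.ofBijective (Algebra.ofId 𝕂 _)
    (algebraMap_quotient_nilradical_bijective h)).symm : (A ⧸ nilradical A) →ₐ[𝕂] 𝕂).comp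
    (Ideal.Quotient.mkₐ 𝕂 (nilradical A))

end Residue

namespace Algebra.TensorProduct

variable {R A B C : Type*} [CommSemiring R] [Semiring A] [Algebra R A] [Semiring B] [Algebra R B]
  [CommSemiring C] [Algebra R C]

theorem productMap_surjective_of_left {f : A →ₐ[R] C} (hf : Function.Surjective f)
    (g : B →ₐ[R] C) : Function.Surjective (productMap f g) := fun c ↦ by
  obtain ⟨a, rfl⟩ := hf c
  exact ⟨a ⊗ₜ 1, by simp [productMap_apply_tmul]⟩

theorem productMap_surjective_of_right (f : A →ₐ[R] C) {g : B →ₐ[R] C}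
    (hg : Function.Surjective g) : Function.Surjective (productMap f g) := fun c ↦ by
  obtain ⟨b, rfl⟩ := hg c
  exact ⟨1 ⊗ₜ b, by simp [productMap_apply_tmul]⟩

end Algebra.TensorProduct

/-- **Directedness of Weil algebras**: any two Weil algebras `A₁`, `A₂` over a field `𝕂`
(nontrivial finite-dimensional commutative unital `𝕂`-algebras in which every element
differs from a scalar by a nilpotent) admit a common Weil algebra `A` together with
surjective unital `𝕂`-algebra homomorphisms `A → A₁` and `A → A₂`. -/
theorem weil_algebras_directed {𝕂 : Type u} [Field 𝕂]
    (A₁ : Type v) [CommRing A₁] [Algebra 𝕂 A₁] [Nontrivial A₁] [FiniteDimensional 𝕂 A₁]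
    (hA₁ : ∀ a : A₁, ∃ c : 𝕂, IsNilpotent (a - algebraMap 𝕂 A₁ c))
    (A₂ : Type w) [CommRing A₂] [Algebra 𝕂 A₂] [Nontrivial A₂] [FiniteDimensional 𝕂 A₂]
    (hA₂ : ∀ a : A₂, ∃ c : 𝕂, IsNilpotent (a - algebraMap 𝕂 A₂ c)) :
    ∃ (A : Type (max v w)) (_ : CommRing A) (_ : Algebra 𝕂 A),
      Nontrivial A ∧ FiniteDimensional 𝕂 A ∧
      (∀ a : A, ∃ c : 𝕂, IsNilpotent (a - algebraMap 𝕂 A c)) ∧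
      ∃ (f : A →ₐ[𝕂] A₁) (g : A →ₐ[𝕂] A₂),
        Function.Surjective f ∧ Function.Surjective g := by
  open Algebra.TensorProduct in
  rw [← scalarsAddNilradical_eq_top_iff] at hA₁ hA₂
  have hnontrivial : Nontrivial (A₁ ⊗[𝕂] A₂) :=
    nontrivial_of_algebraMap_injective_of_flat_left 𝕂 A₁ A₂ (algebraMap 𝕂 A₂).injective
  refine ⟨A₁ ⊗[𝕂] A₂, inferInstance, inferInstance, hnontrivial, inferInstance,
    scalarsAddNilradical_eq_top_iff.mp (scalarsAddNilradical_tensorProduct_eq_top hA₁ hA₂),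
    productMap (.id 𝕂 A₁) ((Algebra.ofId 𝕂 A₁).comp (residueAlgHom hA₂)),
    productMap ((Algebra.ofId 𝕂 A₂).comp (residueAlgHom hA₁)) (.id 𝕂 A₂),
    productMap_surjective_of_left Function.surjective_id _,
    productMap_surjective_of_right _ Function.surjective_id⟩
end

section
/- Gluing a manifold topology from compatible charts on a set (topological part): let X be a set, ι a countable index type, U : ι → Set X a family with ⋃_i U_i = X, and h_i : X → ℝ^n maps such that: (i) h_i is injective on U_i for every i; (ii) for all i, j, the image h_i(U_i ∩ U_j) is open in ℝ^n; (iii) for all i, j, the transition map h_j ∘ (h_i)^{-1} : h_i(U_i ∩ U_j) → h_j(U_i ∩ U_j) is a bijection which is smooth (C^∞) on h_i(U_i ∩ U_j) with smooth inverse on h_j(U_i ∩ U_j); (iv) for all x ≠ y in X there exist indices i, j and subsets V_x ⊆ U_i, V_y ⊆ U_j with x ∈ V_x, y ∈ V_y, V_x ∩ V_y = ∅, and both h_i(V_x) and h_j(V_y) open in ℝ^n. Then there exists a unique topology on X such that every U_i is open and, for every i, the restriction of h_i to U_i is an open embedding onto h_i(U_i); moreover, with this topology X is Hausdorff and second countable.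 -/
open Set Function Topology

/-- `τ` is a topology on `X` making each `U i` open and each chart map `h i`
restricted to `U i` an open embedding (onto its image `h i '' U i`). -/
def IsGluedTopology {X ι : Type*} {n : ℕ} (U : ι → Set X) (h : ι → X → (Fin n → ℝ))
    (τ : TopologicalSpace X) : Prop :=
  letI := τ
  (∀ i, IsOpen (U i)) ∧ ∀ i, Topology.IsOpenEmbedding (fun u : U i => h i u)


/-- Key lemma: any subset of some `U i` with open chart image has open chart images
in all other charts. -/
private lemma glued_aux {X ι : Type*} [Nonempty X] {n : ℕ}
    (U : ι → Set X) (h : ι → X → (Fin n → ℝ))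
    (hinj : ∀ i, Set.InjOn (h i) (U i))
    (himg : ∀ i j, IsOpen (h i '' (U i ∩ U j)))
    (htrans : ∀ i j,
      Set.BijOn (h j ∘ Function.invFunOn (h i) (U i))
        (h i '' (U i ∩ U j)) (h j '' (U i ∩ U j)) ∧
      ContDiffOn ℝ (⊤ : ℕ∞) (h j ∘ Function.invFunOn (h i) (U i)) (h i '' (U i ∩ U j)))
    {A : Set X} {i : ι} (hA : A ⊆ U i) (hAo : IsOpen (h i '' A)) (j : ι) :
    IsOpen (h j '' (A ∩ U j)) := by
  set g := Function.invFunOn (h j) (U j) with hg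
  have hAio : IsOpen (h i '' (A ∩ U j)) := by
    have : A ∩ U j = A ∩ (U i ∩ U j) := by
      ext x; constructor
      · rintro ⟨hx, hxj⟩; exact ⟨hx, hA hx, hxj⟩
      · rintro ⟨hx, _, hxj⟩; exact ⟨hx, hxj⟩
    rw [this, (hinj i).image_inter hA Set.inter_subset_left]
    exact hAo.inter (himg i j)
  have key : h j '' (A ∩ U j) =
      h j '' (U j ∩ U i) ∩ (h i ∘ g) ⁻¹' (h i '' (A ∩ U j)) := by
    ext z; constructor
    · rintro ⟨x, ⟨hxA, hxj⟩, rfl⟩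
      refine ⟨⟨x, ⟨hxj, hA hxA⟩, rfl⟩, ?_⟩
      have : g (h j x) = x := (hinj j).leftInvOn_invFunOn hxj
      simp only [Set.mem_preimage, Function.comp_apply, this]
      exact ⟨x, ⟨hxA, hxj⟩, rfl⟩
    · rintro ⟨⟨x, ⟨hxj, hxi⟩, rfl⟩, hz⟩
      have hgx : g (h j x) = x := (hinj j).leftInvOn_invFunOn hxj
      simp only [Set.mem_preimage, Function.comp_apply, hgx] at hz
      obtain ⟨y, ⟨hyA, hyj⟩, hyx⟩ := hz
      have : y = x := hinj i (hA hyA) hxi hyx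
      exact ⟨x, ⟨this ▸ hyA, hxj⟩, rfl⟩
  rw [key]
  exact ((htrans j i).2.continuousOn).isOpen_inter_preimage (himg j i) hAio

/-- **Gluing a manifold topology from compatible charts on a set** (topological part):
given a countable family of subsets `U i` covering a set `X` and maps `h i : X → ℝ^n`
injective on `U i`, with open images `h i '' (U i ∩ U j)`, smooth transition maps, and a
chart-separation property for distinct points, there is a unique topology on `X` making
each `U i` open and each `h i` an open embedding of `U i` onto its image; with this
topology `X` is Hausdorff and second countable. -/
theorem glued_manifold_topology {X ι : Type*} [Nonempty X] [Countable ι] {n : ℕ}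
    (U : ι → Set X) (hcov : ⋃ i, U i = Set.univ)
    (h : ι → X → (Fin n → ℝ))
    (hinj : ∀ i, Set.InjOn (h i) (U i))
    (himg : ∀ i j, IsOpen (h i '' (U i ∩ U j)))
    (htrans : ∀ i j,
      Set.BijOn (h j ∘ Function.invFunOn (h i) (U i))
        (h i '' (U i ∩ U j)) (h j '' (U i ∩ U j)) ∧
      ContDiffOn ℝ (⊤ : ℕ∞) (h j ∘ Function.invFunOn (h i) (U i)) (h i '' (U i ∩ U j)))
    (hsep : ∀ x y : X, x ≠ y → ∃ i j, ∃ Vx Vy : Set X,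
      Vx ⊆ U i ∧ Vy ⊆ U j ∧ x ∈ Vx ∧ y ∈ Vy ∧ Vx ∩ Vy = ∅ ∧
      IsOpen (h i '' Vx) ∧ IsOpen (h j '' Vy)) :
    (∃! τ : TopologicalSpace X, IsGluedTopology U h τ) ∧
    ∀ τ : TopologicalSpace X, IsGluedTopology U h τ →
      @T2Space X τ ∧ @SecondCountableTopology X τ := by
  classical
  -- the glued topology
  set τ : TopologicalSpace X :=
    { IsOpen := fun S => ∀ i, IsOpen (h i '' (S ∩ U i))
      isOpen_univ := fun i => by
        simpa [Set.univ_inter, Set.inter_self] using himg i i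
      isOpen_inter := fun S T hS hT i => by
        have : S ∩ T ∩ U i = (S ∩ U i) ∩ (T ∩ U i) := by
          ext x; simp only [Set.mem_inter_iff]; tauto
        rw [this, (hinj i).image_inter Set.inter_subset_right Set.inter_subset_right]
        exact (hS i).inter (hT i)
      isOpen_sUnion := fun 𝒮 h𝒮 i => by
        rw [Set.sUnion_eq_biUnion, Set.iUnion₂_inter, Set.image_iUnion₂]
        exact isOpen_biUnion fun S hS => h𝒮 S hS i } with hτ
  have hτopen : ∀ S : Set X, IsOpen[τ] S ↔ ∀ i, IsOpen (h i '' (S ∩ U i)) := fun S => Iff.rfl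
  -- U i is τ-open
  have hUopen : ∀ i, IsOpen[τ] (U i) := by
    intro i j
    simpa [Set.inter_comm] using himg j i
  -- τ is a glued topology
  have hglued : IsGluedTopology U h τ := by
    refine ⟨hUopen, fun i => ?_⟩
    letI := τ
    refine Topology.IsOpenEmbedding.of_continuous_injective_isOpenMap ?_ ?_ ?_
    · -- continuity
      rw [continuous_def]
      intro V hV
      have hW : IsOpen[τ] (U i ∩ h i ⁻¹' V) := by
        refine glued_aux U h hinj himg htrans Set.inter_subset_left ?_
        rw [Set.image_inter_preimage]
        have : IsOpen (h i '' (U i)) := by simpa [Set.inter_self] using himg i i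
        exact this.inter hV
      have : (fun u : U i => h i u) ⁻¹' V = Subtype.val ⁻¹' (U i ∩ h i ⁻¹' V) := by
        ext u; simp [u.2]
      rw [this]
      exact hW.preimage continuous_subtype_val
    · intro a b hab
      exact Subtype.ext (hinj i a.2 b.2 hab)
    · -- open map
      intro O hO
      obtain ⟨S, hS, rfl⟩ := isOpen_induced_iff.mp hO
      have : (fun u : U i => h i u) '' (Subtype.val ⁻¹' S) = h i '' (S ∩ U i) := by
        ext z; constructor
        · rintro ⟨⟨x, hx⟩, hxS, rfl⟩; exact ⟨x, ⟨hxS, hx⟩, rfl⟩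
        · rintro ⟨x, ⟨hxS, hx⟩, rfl⟩; exact ⟨⟨x, hx⟩, hxS, rfl⟩
      rw [this]
      exact hS i
  -- uniqueness
  have huniq : ∀ τ' : TopologicalSpace X, IsGluedTopology U h τ' → τ' = τ := by
    intro τ' ⟨hU', he'⟩
    refine TopologicalSpace.ext ?_
    ext S
    constructor
    · intro hS i
      letI := τ'
      have h1 : IsOpen (Subtype.val ⁻¹' S : Set (U i)) := hS.preimage continuous_subtype_val
      have h2 := (he' i).isOpenMap _ h1
      have : (fun u : U i => h i u) '' (Subtype.val ⁻¹' S) = h i '' (S ∩ U i) := by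
        ext z; constructor
        · rintro ⟨⟨x, hx⟩, hxS, rfl⟩; exact ⟨x, ⟨hxS, hx⟩, rfl⟩
        · rintro ⟨x, ⟨hxS, hx⟩, rfl⟩; exact ⟨⟨x, hx⟩, hxS, rfl⟩
      rwa [this] at h2
    · intro hS
      letI := τ'
      have : S = ⋃ i, S ∩ U i := by
        rw [← Set.inter_iUnion, hcov, Set.inter_univ]
      rw [this]
      refine isOpen_iUnion fun i => ?_
      have h1 : IsOpen ((fun u : U i => h i u) ⁻¹' (h i '' (S ∩ U i)) : Set (U i)) :=
        (he' i).continuous.isOpen_preimage _ (hS i)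
      have h2 : (fun u : U i => h i u) ⁻¹' (h i '' (S ∩ U i)) = Subtype.val ⁻¹' S := by
        ext u
        simp only [Set.mem_preimage]
        constructor
        · rintro ⟨y, ⟨hyS, hyU⟩, hy⟩
          have : y = u.1 := hinj i hyU u.2 hy
          exact this ▸ hyS
        · intro hu; exact ⟨u.1, ⟨hu, u.2⟩, rfl⟩
      rw [h2] at h1
      have := (hU' i).isOpenMap_subtype_val _ h1
      rwa [Subtype.image_preimage_coe, Set.inter_comm] at this
  refine ⟨⟨τ, hglued, huniq⟩, ?_⟩
  intro τ' hg'
  have hrw := huniq τ' hg'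
  subst hrw
  constructor
  · -- T2
    letI := τ
    refine ⟨fun x y hxy => ?_⟩
    obtain ⟨i, j, Vx, Vy, hVxU, hVyU, hxVx, hyVy, hdisj, hVxo, hVyo⟩ := hsep x y hxy
    exact ⟨Vx, Vy, glued_aux U h hinj himg htrans hVxU hVxo,
      glued_aux U h hinj himg htrans hVyU hVyo, hxVx, hyVy,
      Set.disjoint_iff_inter_eq_empty.mpr hdisj⟩
  · -- second countable
    letI := τ
    haveI : ∀ i, SecondCountableTopology (U i) := fun i =>
      (hglued.2 i).isEmbedding.secondCountableTopology
    exact TopologicalSpace.secondCountableTopology_of_countable_cover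
      (fun i => hglued.1 i) hcov
end
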